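/- Let G_t(x) := (1/2)·1_{|x|<t} (t ≥ 0, x ∈ ℝ) be the one-dimensional wave kernel. For t ∈ [0,1], j ≥ 0 and y ∈ ℝ define K_{t,j}(y) := 2^{j} ∫_{|z|<2} |G_t(y − 2^{−j} z) − G_t(y)| dz. Then: (i) K_{t,j}(y) = 0 whenever |y| ≥ t + 2; and (ii) there exists a finite constant C such that sup_{j ≥ 0} sup_{t ∈ [0,1]} ∫_ℝ K_{t,j}(y) dy ≤ C. -/

import Mathlib

open MeasureTheory ENNReal

noncomputable section

/-- Convolution on `ℝ`. -/
def conv1 (f g : ℝ → ℝ) : ℝ → ℝ := fun x => ∫ y, f (x - y) * g y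

/-- Weighted `L^p` norm on `ℝ` with exponential weight `e^{-μ|x|}`, valued in `[0,∞]`. -/
def wLp1 (p μ : ℝ) (f : ℝ → ℝ) : ℝ≥0∞ :=
  (∫⁻ x, ENNReal.ofReal (|f x| ^ p * Real.exp (-μ * |x|))) ^ (1 / p)

/-- One-dimensional wave kernel `G_t(x) = (1/2)·1_{|x|<t}`. -/
def G1 (t x : ℝ) : ℝ := if |x| < t then 1 / 2 else 0

/-- The quantity `K_{t,j}(y) := 2^j ∫_{|z|<2} |G_t(y - 2^{-j}z) - G_t(y)| dz`, valued in `[0,∞]`. -/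
def K1 (t : ℝ) (j : ℕ) (y : ℝ) : ℝ≥0∞ :=
  ENNReal.ofReal ((2 : ℝ) ^ j) *
    ∫⁻ z in Metric.ball (0 : ℝ) 2,
      ENNReal.ofReal |G1 t (y - (2 : ℝ) ^ (-(j : ℝ)) * z) - G1 t y|

/-!
Translating `G_t` by `w` only changes it on the set `t - |w| ≤ |y| ≤ t + |w|`, of measure at most
`4|w|`, so `∫ |G_t(y - w) - G_t(y)| dy ≤ 2|w|`. By Tonelli, `∫ K_{t,j} ≤ 2^j ∫_{|z|<2} 2·2^{-j}|z| dz`,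
which is bounded independently of `t` and `j`. For the support, `|y| ≥ t + 2` keeps both `y` and
`y - 2^{-j}z` (with `|2^{-j}z| < 2`) outside `(-t, t)`.
-/

lemma measurable_G1 (t : ℝ) : Measurable (G1 t) :=
  Measurable.ite (measurableSet_lt continuous_abs.measurable measurable_const)
    measurable_const measurable_const

lemma volume_abs_mem_Icc_le (a b : ℝ) :
    volume {y : ℝ | |y| ∈ Set.Icc a b} ≤ 2 * ENNReal.ofReal (b - a) := by
  have hsub : {y : ℝ | |y| ∈ Set.Icc a b} ⊆ Set.Icc a b ∪ Set.Icc (-b) (-a) := by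
    rintro y ⟨ha, hb⟩
    rcases le_total 0 y with hy | hy
    · rw [abs_of_nonneg hy] at ha hb
      exact Or.inl ⟨ha, hb⟩
    · rw [abs_of_nonpos hy] at ha hb
      exact Or.inr ⟨by linarith, by linarith⟩
  calc volume {y : ℝ | |y| ∈ Set.Icc a b}
      ≤ volume (Set.Icc a b) + volume (Set.Icc (-b) (-a)) :=
        (measure_mono hsub).trans (measure_union_le _ _)
    _ = 2 * ENNReal.ofReal (b - a) := by
        rw [Real.volume_Icc, Real.volume_Icc, neg_sub_neg, two_mul]

lemma abs_G1_sub_G1_le_indicator (t w y : ℝ) :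
    ENNReal.ofReal |G1 t (y - w) - G1 t y| ≤
      {y : ℝ | |y| ∈ Set.Icc (t - |w|) (t + |w|)}.indicator (fun _ => 2⁻¹) y := by
  have tri := abs_sub_abs_le_abs_sub y w
  have tri' : |y - w| - |w| ≤ |y| := by simpa using abs_sub_abs_le_abs_sub (y - w) (-w)
  unfold G1
  by_cases hA : |y - w| < t <;> by_cases hB : |y| < t
  · simp [hA, hB]
  · rw [Set.indicator_of_mem (s := {y : ℝ | |y| ∈ Set.Icc (t - |w|) (t + |w|)})
      ⟨by linarith, by linarith⟩]
    simp [hA, hB]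
  · rw [Set.indicator_of_mem (s := {y : ℝ | |y| ∈ Set.Icc (t - |w|) (t + |w|)})
      ⟨by linarith, by linarith⟩]
    simp [hA, hB]
  · simp [hA, hB]

lemma lintegral_abs_G1_translate_sub_le (t w : ℝ) :
    ∫⁻ y, ENNReal.ofReal |G1 t (y - w) - G1 t y| ≤ ENNReal.ofReal (2 * |w|) := by
  have hmeas : MeasurableSet {y : ℝ | |y| ∈ Set.Icc (t - |w|) (t + |w|)} :=
    measurableSet_Icc.preimage continuous_abs.measurable
  calc ∫⁻ y, ENNReal.ofReal |G1 t (y - w) - G1 t y|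
      ≤ ∫⁻ y, {y : ℝ | |y| ∈ Set.Icc (t - |w|) (t + |w|)}.indicator (fun _ => 2⁻¹) y :=
        lintegral_mono (abs_G1_sub_G1_le_indicator t w)
    _ = 2⁻¹ * volume {y : ℝ | |y| ∈ Set.Icc (t - |w|) (t + |w|)} := by
        rw [lintegral_indicator_const hmeas]
    _ ≤ 2⁻¹ * (2 * ENNReal.ofReal (t + |w| - (t - |w|))) := by
        gcongr; exact volume_abs_mem_Icc_le _ _
    _ = ENNReal.ofReal (2 * |w|) := by
        rw [← mul_assoc, ENNReal.inv_mul_cancel two_ne_zero ofNat_ne_top, one_mul]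
        ring_nf

lemma K1_eq_zero_of_add_two_le_abs (t : ℝ) (j : ℕ) (y : ℝ) (hy : t + 2 ≤ |y|) :
    K1 t j y = 0 := by
  have hscale : 0 < (2 : ℝ) ^ (-(j : ℝ)) := by positivity
  have hscale_le : (2 : ℝ) ^ (-(j : ℝ)) ≤ 1 :=
    Real.rpow_le_one_of_one_le_of_nonpos one_le_two (by simp)
  have hzero : ∀ z ∈ Metric.ball (0 : ℝ) 2,
      ENNReal.ofReal |G1 t (y - (2 : ℝ) ^ (-(j : ℝ)) * z) - G1 t y| = 0 := by
    intro z hz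
    rw [mem_ball_zero_iff, Real.norm_eq_abs] at hz
    have hshift : |(2 : ℝ) ^ (-(j : ℝ)) * z| ≤ 2 := by
      rw [abs_mul, abs_of_pos hscale]
      nlinarith [abs_nonneg z]
    have := abs_sub_abs_le_abs_sub y ((2 : ℝ) ^ (-(j : ℝ)) * z)
    rw [G1, G1, if_neg (by linarith), if_neg (by linarith), sub_zero, abs_zero, ofReal_zero]
  rw [K1, setLIntegral_congr_fun measurableSet_ball hzero, lintegral_zero, mul_zero]

lemma lintegral_K1_le (t : ℝ) (j : ℕ) : ∫⁻ y, K1 t j y ≤ ENNReal.ofReal 16 := by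
  set c : ℝ := (2 : ℝ) ^ (-(j : ℝ)) with hc
  have hc0 : 0 < c := by positivity
  have hcj : (2 : ℝ) ^ j * c = 1 := by
    rw [hc, ← Real.rpow_natCast, ← Real.rpow_add two_pos, add_neg_cancel, Real.rpow_zero]
  have hmeas : Measurable fun p : ℝ × ℝ => ENNReal.ofReal |G1 t (p.1 - c * p.2) - G1 t p.1| :=
    ENNReal.measurable_ofReal.comp
      (((measurable_G1 t).comp (measurable_fst.sub (measurable_snd.const_mul c))).sub
        ((measurable_G1 t).comp measurable_fst)).abs
  have hinner : ∀ z ∈ Metric.ball (0 : ℝ) 2,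
      ∫⁻ y, ENNReal.ofReal |G1 t (y - c * z) - G1 t y| ≤ ENNReal.ofReal (4 * c) := by
    intro z hz
    rw [mem_ball_zero_iff, Real.norm_eq_abs] at hz
    refine (lintegral_abs_G1_translate_sub_le t (c * z)).trans (ENNReal.ofReal_le_ofReal ?_)
    rw [abs_mul, abs_of_pos hc0]
    nlinarith
  calc ∫⁻ y, K1 t j y
      = ENNReal.ofReal (2 ^ j) *
          ∫⁻ z in Metric.ball (0 : ℝ) 2, ∫⁻ y, ENNReal.ofReal |G1 t (y - c * z) - G1 t y| := by
        simp only [K1]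
        rw [lintegral_const_mul' _ _ ofReal_ne_top, lintegral_lintegral_swap hmeas.aemeasurable]
    _ ≤ ENNReal.ofReal (2 ^ j) * ∫⁻ _ in Metric.ball (0 : ℝ) 2, ENNReal.ofReal (4 * c) :=
        mul_le_mul_right (setLIntegral_mono measurable_const hinner) _
    _ = ENNReal.ofReal 16 := by
        rw [setLIntegral_const, Real.volume_ball, ← ENNReal.ofReal_mul (by positivity),
          ← ENNReal.ofReal_mul (by positivity)]
        congr 1
        linear_combination 16 * hcj

/-- support and uniform `L¹` bound for `K_{t,j}` in dimension 1. -/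
theorem stmt12 :
    (∀ t ∈ Set.Icc (0 : ℝ) 1, ∀ j : ℕ, ∀ y : ℝ, t + 2 ≤ |y| → K1 t j y = 0) ∧
      ∃ C : ℝ, ∀ j : ℕ, ∀ t ∈ Set.Icc (0 : ℝ) 1,
        ∫⁻ y : ℝ, K1 t j y ≤ ENNReal.ofReal C :=
  ⟨fun t _ j y hy => K1_eq_zero_of_add_two_le_abs t j y hy,
    ⟨16, fun j t _ => lintegral_K1_le t j⟩⟩
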